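/- Let r, s be real with 0 < s, 2s < r, and r + 5s/3 < 1, and suppose 1/2 + s/3 ≤ r ≤ 1/2 + s. Set p₁ = ((3 − 6(r − s))/4, (3 − 2(r − s))/4), p₂ = (r − s, (3 − 2(r − s))/4), p₃ = (r − s, 2(r − s)). Then p₁ lies in the closed region D2 = {(y₁, y₂) : 0 ≤ y₁ ≤ s, r − s + y₁ ≤ y₂ ≤ r}, p₂ lies in the closed region D4 = {(y₁, y₂) : r − s ≤ y₁ ≤ y₂, r − s ≤ y₂ ≤ r}, p₃ lies in the closed region D11 = {(y₁, y₂) : s ≤ y₁ ≤ r − 3(1 − y₂)/4, 1 − 4s/3 ≤ y₂ ≤ 1}, and F₂(p₁) = p₂, F₄(p₂) = p₃, F₁₁(p₃) = p₁. Thus (p₁, p₂, p₃) is a period-3 orbit with symbolic code 2 → 4 → 11. -/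

import Mathlib

/-- The affine branch of the return-time map on region 2. -/
noncomputable def F2 (r s : ℝ) (p : ℝ × ℝ) : ℝ × ℝ :=
  (1 - (5*p.2 - p.1)/3 + 2*(r - s)/3, 1 - (5*p.2 - 4*p.1)/3 + 2*(r - s)/3)

/-- The affine branch of the return-time map on region 4. -/
noncomputable def F4 (r s : ℝ) (p : ℝ × ℝ) : ℝ × ℝ :=
  (1 - 4*p.2/3 + (r - s)/3, 1 - 4*(p.2 - p.1)/3)

/-- The affine branch of the return-time map on region 11. -/
noncomputable def F11 (p : ℝ × ℝ) : ℝ × ℝ :=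
  (3*(1 - p.2)/4, p.1 + 3*(1 - p.2)/4)

/-- The closed region D2. -/
def D2 (r s : ℝ) : Set (ℝ × ℝ) :=
  {p | 0 ≤ p.1 ∧ p.1 ≤ s ∧ r - s + p.1 ≤ p.2 ∧ p.2 ≤ r}

/-- The closed region D4. -/
def D4 (r s : ℝ) : Set (ℝ × ℝ) :=
  {p | r - s ≤ p.1 ∧ p.1 ≤ p.2 ∧ r - s ≤ p.2 ∧ p.2 ≤ r}

/-- The closed region D11. -/
def D11 (r s : ℝ) : Set (ℝ × ℝ) :=
  {p | s ≤ p.1 ∧ p.1 ≤ r - 3*(1 - p.2)/4 ∧ 1 - 4*s/3 ≤ p.2 ∧ p.2 ≤ 1}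

/-!
Write `τ = r - s`. The three points depend on `(r, s)` only through `τ`, and the three map
identities are polynomial identities in `τ`. The region constraints collapse to three linear
ones: `s ≤ τ` (that is `2s ≤ r`), `τ ≤ 1/2` (that is `r ≤ 1/2 + s`) and `3 - 6τ ≤ 4s`
(that is `1/2 + s/3 ≤ r`); the remaining constraints hold with equality.
-/

section PeriodThreeOrbit

variable (r s : ℝ)

noncomputable def orbitPoint₁ : ℝ × ℝ := ((3 - 6*(r - s))/4, (3 - 2*(r - s))/4)

noncomputable def orbitPoint₂ : ℝ × ℝ := (r - s, (3 - 2*(r - s))/4)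

noncomputable def orbitPoint₃ : ℝ × ℝ := (r - s, 2*(r - s))

variable {r s}

theorem orbitPoint₁_mem_D2 (hlo : 1/2 + s/3 ≤ r) (hhi : r ≤ 1/2 + s) :
    orbitPoint₁ r s ∈ D2 r s := by
  unfold D2 orbitPoint₁
  refine ⟨?_, ?_, ?_, ?_⟩ <;> dsimp only <;> linarith

theorem orbitPoint₂_mem_D4 (hlo : 1/2 + s/3 ≤ r) (hhi : r ≤ 1/2 + s) :
    orbitPoint₂ r s ∈ D4 r s := by
  unfold D4 orbitPoint₂
  refine ⟨?_, ?_, ?_, ?_⟩ <;> dsimp only <;> linarith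

theorem orbitPoint₃_mem_D11 (hrs : 2*s < r) (hlo : 1/2 + s/3 ≤ r) (hhi : r ≤ 1/2 + s) :
    orbitPoint₃ r s ∈ D11 r s := by
  unfold D11 orbitPoint₃
  refine ⟨?_, ?_, ?_, ?_⟩ <;> dsimp only <;> linarith

variable (r s)

theorem F2_orbitPoint₁ : F2 r s (orbitPoint₁ r s) = orbitPoint₂ r s := by
  unfold F2 orbitPoint₁ orbitPoint₂
  ext <;> dsimp only <;> ring

theorem F4_orbitPoint₂ : F4 r s (orbitPoint₂ r s) = orbitPoint₃ r s := by
  unfold F4 orbitPoint₂ orbitPoint₃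
  ext <;> dsimp only <;> ring

theorem F11_orbitPoint₃ : F11 (orbitPoint₃ r s) = orbitPoint₁ r s := by
  unfold F11 orbitPoint₃ orbitPoint₁
  ext <;> dsimp only <;> ring

end PeriodThreeOrbit

theorem period3_orbit_2_4_11_general (r s : ℝ)
    (hrs : 2*s < r)
    (hlo : 1/2 + s/3 ≤ r) (hhi : r ≤ 1/2 + s) :
    ((3 - 6*(r - s))/4, (3 - 2*(r - s))/4) ∈ D2 r s ∧
    (r - s, (3 - 2*(r - s))/4) ∈ D4 r s ∧
    (r - s, 2*(r - s)) ∈ D11 r s ∧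
    F2 r s ((3 - 6*(r - s))/4, (3 - 2*(r - s))/4) = (r - s, (3 - 2*(r - s))/4) ∧
    F4 r s (r - s, (3 - 2*(r - s))/4) = (r - s, 2*(r - s)) ∧
    F11 (r - s, 2*(r - s)) = ((3 - 6*(r - s))/4, (3 - 2*(r - s))/4) :=
  ⟨orbitPoint₁_mem_D2 hlo hhi, orbitPoint₂_mem_D4 hlo hhi, orbitPoint₃_mem_D11 hrs hlo hhi,
    F2_orbitPoint₁ r s, F4_orbitPoint₂ r s, F11_orbitPoint₃ r s⟩

theorem period3_orbit_2_4_11 (r s : ℝ)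
    (hs : 0 < s) (hrs : 2*s < r) (h1 : r + 5*s/3 < 1)
    (hlo : 1/2 + s/3 ≤ r) (hhi : r ≤ 1/2 + s) :
    ((3 - 6*(r - s))/4, (3 - 2*(r - s))/4) ∈ D2 r s ∧
    (r - s, (3 - 2*(r - s))/4) ∈ D4 r s ∧
    (r - s, 2*(r - s)) ∈ D11 r s ∧
    F2 r s ((3 - 6*(r - s))/4, (3 - 2*(r - s))/4) = (r - s, (3 - 2*(r - s))/4) ∧
    F4 r s (r - s, (3 - 2*(r - s))/4) = (r - s, 2*(r - s)) ∧
    F11 (r - s, 2*(r - s)) = ((3 - 6*(r - s))/4, (3 - 2*(r - s))/4) :=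
  period3_orbit_2_4_11_general r s hrs hlo hhi
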